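/- Let C be a Boolean circuit of depth d over input literals x_1,…,x_n,¬x_1,…,¬x_n whose gates are either OR gates of fan-in at most ℓ (with ℓ ≥ 2) or AND gates of fan-in 2. Then there exists a polynomial P over ℤ of total degree at most 2^d, having at most ℓ^{2^d} monomial terms, such that for all Boolean inputs x ∈ {0,1}^n, P(x) = 0 if and only if C(x) = 0. -/

import Mathlib

/-- Boolean circuits over literals `x i`, `¬ x i`, with unbounded fan-in OR
gates and fan-in-2 AND gates. -/
inductive BCircuit (n : ℕ) where
  | pos : Fin n → BCircuit n
  | neg : Fin n → BCircuit n
  | or  : List (BCircuit n) → BCircuit n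
  | and : BCircuit n → BCircuit n → BCircuit n

namespace BCircuit

def eval {n : ℕ} (x : Fin n → Bool) : BCircuit n → Bool
  | pos i => x i
  | neg i => !(x i)
  | or cs => cs.attach.any (fun c => eval x c.1)
  | and a b => eval x a && eval x b
decreasing_by all_goals simp_wf <;> ((try have := List.sizeOf_lt_of_mem c.2); omega)

/-- Depth of the circuit: literals have depth 0, each gate adds one. -/
def depth {n : ℕ} : BCircuit n → ℕ
  | pos _ => 0
  | neg _ => 0
  | or cs => (cs.attach.map (fun c => depth c.1)).foldr max 0 + 1
  | and a b => max (depth a) (depth b) + 1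
decreasing_by all_goals simp_wf <;> ((try have := List.sizeOf_lt_of_mem c.2); omega)

/-- Every OR gate has fan-in at most ℓ (AND gates have fan-in 2 by construction). -/
def fanInLE {n : ℕ} (ℓ : ℕ) : BCircuit n → Prop
  | pos _ => True
  | neg _ => True
  | or cs => cs.length ≤ ℓ ∧ ∀ c ∈ cs.attach, fanInLE ℓ c.1
  | and a b => fanInLE ℓ a ∧ fanInLE ℓ b
decreasing_by all_goals simp_wf <;> ((try have := List.sizeOf_lt_of_mem c.2); omega)

end BCircuit


open MvPolynomial


lemma le_foldr_max (a : ℕ) : ∀ l : List ℕ, a ∈ l → a ≤ l.foldr max 0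
  | b :: t, h => by
    rcases List.mem_cons.1 h with rfl | h
    · exact le_max_left _ _
    · exact le_trans (le_foldr_max a t h) (le_max_right _ _)

lemma key (n ℓ : ℕ) (hℓ : 2 ≤ ℓ) :
    ∀ (N : ℕ) (C : BCircuit n), sizeOf C < N → ∀ d, C.depth ≤ d → C.fanInLE ℓ →
    ∃ P : MvPolynomial (Fin n) ℤ,
      P.totalDegree ≤ 2 ^ d ∧
      P.support.card ≤ ℓ ^ (2 ^ d) ∧
      (∀ x : Fin n → Bool, 0 ≤ MvPolynomial.eval (fun i => if x i then (1 : ℤ) else 0) P) ∧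
      ∀ x : Fin n → Bool,
        (MvPolynomial.eval (fun i => if x i then (1 : ℤ) else 0) P = 0 ↔
          C.eval x = false) := by
  intro N
  induction N with
  | zero => intro C h; omega
  | succ N ih =>
    intro C hC d hd hf
    have h1 : (1:ℕ) ≤ 2 ^ d := Nat.one_le_two_pow
    have hℓ1 : (1:ℕ) ≤ ℓ ^ 2 ^ d := Nat.one_le_pow _ _ (by omega)
    match C with
    | .pos i =>
      refine ⟨X i, ?_, ?_, ?_, ?_⟩
      · simpa using h1
      · rw [support_X]; simpa using hℓ1
      · intro x; simp only [eval_X]; split <;> norm_num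
      · intro x; cases h : x i <;> simp [BCircuit.eval, h]
    | .neg i =>
      refine ⟨1 - X i, ?_, ?_, ?_, ?_⟩
      · refine le_trans (totalDegree_sub _ _) ?_; simpa using h1
      · refine le_trans (Finset.card_le_card (support_sub _ _ _)) ?_
        refine le_trans (Finset.card_union_le _ _) ?_
        have h2 : ℓ ≤ ℓ ^ 2 ^ d := Nat.le_self_pow (by omega) ℓ
        have hs1 : ((1 : MvPolynomial (Fin n) ℤ)).support.card ≤ 1 := by
          rw [show (1 : MvPolynomial (Fin n) ℤ) = monomial 0 1 from rfl, support_monomial]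
          split <;> simp
        rw [support_X]
        simp only [Finset.card_singleton]
        omega
      · intro x; simp only [map_sub, map_one, eval_X]; split <;> norm_num
      · intro x; cases h : x i <;> simp [BCircuit.eval, h]
    | .or cs =>
      rw [BCircuit.depth] at hd
      rw [BCircuit.fanInLE] at hf
      have hdep : (cs.attach.map (fun c => BCircuit.depth c.1)).foldr max 0 + 1 ≤ d := hd
      obtain ⟨e, rfl⟩ : ∃ e, d = e + 1 := ⟨d - 1, by omega⟩
      have hchild : ∀ c ∈ cs, ∃ P : MvPolynomial (Fin n) ℤ,
          P.totalDegree ≤ 2 ^ e ∧ P.support.card ≤ ℓ ^ 2 ^ e ∧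
          (∀ x : Fin n → Bool, 0 ≤ MvPolynomial.eval (fun i => if x i then (1 : ℤ) else 0) P) ∧
          ∀ x : Fin n → Bool,
            (MvPolynomial.eval (fun i => if x i then (1 : ℤ) else 0) P = 0 ↔
              c.eval x = false) := by
        intro c hc
        have hsz : sizeOf c < sizeOf (BCircuit.or cs) := by
          have := List.sizeOf_lt_of_mem hc; simp; omega
        have hdc : c.depth ≤ e := by
          have : c.depth ∈ cs.attach.map (fun c => BCircuit.depth c.1) := by
            simp only [List.mem_map]
            exact ⟨⟨c, hc⟩, List.mem_attach _ _, rfl⟩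
          have := le_foldr_max _ _ this; omega
        exact ih c (by omega) e hdc (hf.2 ⟨c, hc⟩ (List.mem_attach _ _))
      -- inner: build sum polynomial over a sublist
      have inner : ∀ cs' : List (BCircuit n), (∀ c ∈ cs', c ∈ cs) →
          ∃ P : MvPolynomial (Fin n) ℤ,
            P.totalDegree ≤ 2 ^ e ∧ P.support.card ≤ cs'.length * ℓ ^ 2 ^ e ∧
            (∀ x : Fin n → Bool, 0 ≤ MvPolynomial.eval (fun i => if x i then (1 : ℤ) else 0) P) ∧
            ∀ x : Fin n → Bool,
              (MvPolynomial.eval (fun i => if x i then (1 : ℤ) else 0) P = 0 ↔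
                ∀ c ∈ cs', c.eval x = false) := by
        intro cs'
        induction cs' with
        | nil => intro _; exact ⟨0, by simp, by simp, by simp, by simp⟩
        | cons c t iht =>
          intro hsub
          obtain ⟨Q, hQd, hQc, hQn, hQe⟩ := iht (fun c hc => hsub c (List.mem_cons_of_mem _ hc))
          obtain ⟨Pc, hPd, hPc, hPn, hPe⟩ := hchild c (hsub c (List.mem_cons_self))
          refine ⟨Pc + Q, ?_, ?_, ?_, ?_⟩
          · exact le_trans (totalDegree_add _ _) (max_le hPd hQd)
          · refine le_trans (Finset.card_le_card (support_add)) ?_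
            refine le_trans (Finset.card_union_le _ _) ?_
            simp only [List.length_cons]; nlinarith
          · intro x; simp only [map_add]; exact add_nonneg (hPn x) (hQn x)
          · intro x
            simp only [map_add]
            rw [add_eq_zero_iff_of_nonneg (hPn x) (hQn x), hPe x, hQe x]
            constructor
            · rintro ⟨h1', h2'⟩ c' hc'
              rcases List.mem_cons.1 hc' with rfl | hc' ; exacts [h1', h2' c' hc']
            · intro h
              exact ⟨h c (List.mem_cons_self), fun c' hc' => h c' (List.mem_cons_of_mem _ hc')⟩
      obtain ⟨P, hPd, hPc, hPn, hPe⟩ := inner cs (fun _ h => h)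
      refine ⟨P, le_trans hPd (Nat.pow_le_pow_right (by omega) (by omega)), ?_, hPn, ?_⟩
      · refine le_trans hPc ?_
        calc cs.length * ℓ ^ 2 ^ e ≤ ℓ * ℓ ^ 2 ^ e :=
              Nat.mul_le_mul_right _ hf.1
          _ = ℓ ^ (2 ^ e + 1) := by ring
          _ ≤ ℓ ^ 2 ^ (e + 1) := Nat.pow_le_pow_right (by omega)
              (by rw [pow_succ]; omega)
      · intro x
        rw [hPe x]
        show _ ↔ BCircuit.eval x (.or cs) = false
        rw [BCircuit.eval]
        simp [List.any_eq_false]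
    | .and a b =>
      rw [BCircuit.depth] at hd
      rw [BCircuit.fanInLE] at hf
      obtain ⟨e, rfl⟩ : ∃ e, d = e + 1 := ⟨d - 1, by omega⟩
      have hsa : sizeOf a < N := by simp at hC; omega
      have hsb : sizeOf b < N := by simp at hC; omega
      obtain ⟨Pa, had, hac, han, hae⟩ := ih a hsa e (by omega) hf.1
      obtain ⟨Pb, hbd, hbc, hbn, hbe⟩ := ih b hsb e (by omega) hf.2
      refine ⟨Pa * Pb, ?_, ?_, ?_, ?_⟩
      · refine le_trans (totalDegree_mul _ _) ?_
        rw [pow_succ, Nat.mul_two]; omega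
      · classical
        refine le_trans (Finset.card_le_card (support_mul _ _)) ?_
        refine le_trans (Finset.card_add_le) ?_
        calc Pa.support.card * Pb.support.card ≤ ℓ ^ 2 ^ e * ℓ ^ 2 ^ e :=
              Nat.mul_le_mul hac hbc
          _ = ℓ ^ 2 ^ (e + 1) := by rw [← pow_add, pow_succ, Nat.mul_two]
      · intro x; simp only [map_mul]; exact mul_nonneg (han x) (hbn x)
      · intro x
        simp only [map_mul, mul_eq_zero, hae x, hbe x]
        show _ ↔ BCircuit.eval x (.and a b) = false
        rw [BCircuit.eval]
        cases a.eval x <;> cases b.eval x <;> simp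

theorem stmt_4 (n d ℓ : ℕ) (hℓ : 2 ≤ ℓ) (C : BCircuit n)
    (hdepth : C.depth ≤ d) (hfan : C.fanInLE ℓ) :
    ∃ P : MvPolynomial (Fin n) ℤ,
      P.totalDegree ≤ 2 ^ d ∧
      P.support.card ≤ ℓ ^ (2 ^ d) ∧
      ∀ x : Fin n → Bool,
        (MvPolynomial.eval (fun i => if x i then (1 : ℤ) else 0) P = 0 ↔
          C.eval x = false) := by
  obtain ⟨P, h1, h2, _, h4⟩ := key n ℓ hℓ (sizeOf C + 1) C (by omega) d hdepth hfan
  exact ⟨P, h1, h2, h4⟩
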